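/- arXiv:1903.07485 — 4 statements merged into one kernel-verified Lean document; each statement's English description precedes it below -/
import Mathlib

section
/- Let α ∈ (0,1). There exist universal constants A and L₀ ≥ 2 such that for all L ≥ L₀ and all x, y ∈ ℝ² with x₁, x₂ > 0, y₁ ≥ L|x|, y₂ ≥ L|x|: the kernel K₁(x,y) = (x₂−y₂)/|x−y|^{2+2α} − (x₂−y₂)/|x̃−y|^{2+2α} − (x₂+y₂)/|x̄−y|^{2+2α} + (x₂+y₂)/|x+y|^{2+2α} satisfies K₁(x,y) = −8(1+α) x₁ y₁ y₂ |y|^{−4−2α} (1 + f₁(x,y)) with |f₁(x,y)| ≤ A L^{−1}. -/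
/-!
Write β = 1 + α and k(a, b) = b (a² + b²)^(-β), so that K₁(x, y) is the alternating sum of k
over the four points (x₁ ∓ y₁, x₂ ∓ y₂). Since k is even in a, K₁ vanishes at x₁ = 0, and the mean
value theorem in x₁ gives K₁ = x₁ ∂₁K₁(0, 0) up to x₁ times the oscillation of ∂₁K₁ on the
relevant range. As ∂ₐk is odd in each variable, ∂₁K₁(s, t) is the sum of ∂ₐk over the four points
(y₁ ± s, y₂ ± t); at s = t = 0 this is 4 ∂ₐk(y₁, y₂) = -8β y₁ y₂ |y|^(-2β-2), the main term.
These four points stay in the quadrant a ≥ y₁/2, b ≥ y₂/2, where ∂ₐ²k = O(|y|^(-2β-1)); because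
∂ₐk is symmetric in (a, b), this also bounds ∂_b ∂ₐk. So the oscillation is O(|x| |y|^(-2β-1)),
a relative error O(|x| |y| / (y₁ y₂)) = O(1/L).
-/

open Real Set

noncomputable def sqgKernel (β a b : ℝ) : ℝ := b * (a ^ 2 + b ^ 2) ^ (-β)

noncomputable def sqgKernelDeriv (β a b : ℝ) : ℝ := -2 * β * a * b * (a ^ 2 + b ^ 2) ^ (-β - 1)

noncomputable def sqgKernelDeriv2 (β a b : ℝ) : ℝ :=
  b * (a ^ 2 + b ^ 2) ^ (-β - 2) * (4 * β * (β + 1) * a ^ 2 - 2 * β * (a ^ 2 + b ^ 2))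

lemma div_sqrt_rpow_eq_sqgKernel (β a b : ℝ) :
    b / √(a ^ 2 + b ^ 2) ^ (2 * β) = sqgKernel β a b := by
  rw [← rpow_div_two_eq_sqrt _ (by positivity), mul_div_cancel_left₀ _ two_ne_zero,
    sqgKernel, rpow_neg (by positivity), div_eq_mul_inv]

lemma sqgKernel_neg_left (β a b : ℝ) : sqgKernel β (-a) b = sqgKernel β a b := by
  simp [sqgKernel]

lemma sqgKernelDeriv_comm (β a b : ℝ) : sqgKernelDeriv β a b = sqgKernelDeriv β b a := by
  unfold sqgKernelDeriv; rw [add_comm (a ^ 2)]; ring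

lemma sqgKernelDeriv_neg_left (β a b : ℝ) : sqgKernelDeriv β (-a) b = -sqgKernelDeriv β a b := by
  simp only [sqgKernelDeriv, neg_sq]; ring

lemma sqgKernelDeriv_neg_right (β a b : ℝ) : sqgKernelDeriv β a (-b) = -sqgKernelDeriv β a b := by
  simp only [sqgKernelDeriv, neg_sq]; ring

lemma hasDerivAt_sqgKernel (β b : ℝ) {a : ℝ} (ha : a ≠ 0) :
    HasDerivAt (fun s => sqgKernel β s b) (sqgKernelDeriv β a b) a := by
  have hQ : HasDerivAt (fun s : ℝ => s ^ 2 + b ^ 2) (2 * a) a := by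
    simpa using (hasDerivAt_pow 2 a).add_const (b ^ 2)
  refine ((hQ.rpow_const (p := -β) (Or.inl (by positivity))).const_mul b).congr_deriv ?_
  rw [sqgKernelDeriv]; ring

lemma hasDerivAt_sqgKernelDeriv (β b : ℝ) {a : ℝ} (ha : a ≠ 0) :
    HasDerivAt (fun s => sqgKernelDeriv β s b) (sqgKernelDeriv2 β a b) a := by
  have hQpos : 0 < a ^ 2 + b ^ 2 := by positivity
  have hQ : HasDerivAt (fun s : ℝ => s ^ 2 + b ^ 2) (2 * a) a := by
    simpa using (hasDerivAt_pow 2 a).add_const (b ^ 2)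
  have hpow : (a ^ 2 + b ^ 2) ^ (-β - 1) = (a ^ 2 + b ^ 2) * (a ^ 2 + b ^ 2) ^ (-β - 2) := by
    rw [show -β - 1 = 1 + (-β - 2) by ring, rpow_add hQpos, rpow_one]
  have hf : (fun s => sqgKernelDeriv β s b) =
      fun s => -2 * β * b * (s * (s ^ 2 + b ^ 2) ^ (-β - 1)) := by
    funext s; rw [sqgKernelDeriv]; ring
  rw [hf]
  refine (((hasDerivAt_id' a).fun_mul (hQ.rpow_const (Or.inl hQpos.ne'))).const_mul
    (-2 * β * b)).congr_deriv ?_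
  rw [sqgKernelDeriv2, show -β - 1 - 1 = -β - 2 by ring, hpow]; ring

lemma abs_sqgKernelDeriv2_le {β m a b : ℝ} (hβ : 0 ≤ β) (hm : 0 < m) (hQ : m ≤ a ^ 2 + b ^ 2) :
    |sqgKernelDeriv2 β a b| ≤ 2 * β * (2 * β + 3) * m ^ (-β - 1 / 2) := by
  set Q := a ^ 2 + b ^ 2
  have hQpos : 0 < Q := hm.trans_le hQ
  have hb : |b| ≤ √Q := by
    rw [← sqrt_sq_eq_abs]; exact sqrt_le_sqrt (by nlinarith [sq_nonneg a])
  have hbracket : |4 * β * (β + 1) * a ^ 2 - 2 * β * Q| ≤ 2 * β * (2 * β + 3) * Q := by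
    have : a ^ 2 ≤ Q := by nlinarith [sq_nonneg b]
    have hβa := mul_le_mul_of_nonneg_left this (by positivity : 0 ≤ β * (β + 1))
    rw [abs_le]; constructor <;> nlinarith [mul_nonneg (mul_nonneg hβ hβ) hQpos.le,
      mul_nonneg hβ hQpos.le, mul_nonneg (by positivity : 0 ≤ β * (β + 1)) (sq_nonneg a)]
  have hsplit : √Q * (Q * Q ^ (-β - 2)) = Q ^ (-β - 1 / 2) := by
    rw [sqrt_eq_rpow]; nth_rewrite 2 [← rpow_one Q]
    rw [← rpow_add hQpos, ← rpow_add hQpos]; ring_nf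
  calc |sqgKernelDeriv2 β a b|
      = |b| * Q ^ (-β - 2) * |4 * β * (β + 1) * a ^ 2 - 2 * β * Q| := by
        rw [sqgKernelDeriv2, abs_mul, abs_mul, abs_of_pos (rpow_pos_of_pos hQpos _)]
    _ ≤ √Q * Q ^ (-β - 2) * (2 * β * (2 * β + 3) * Q) := by gcongr
    _ = 2 * β * (2 * β + 3) * Q ^ (-β - 1 / 2) := by
        linear_combination (2 * β * (2 * β + 3)) * hsplit
    _ ≤ 2 * β * (2 * β + 3) * m ^ (-β - 1 / 2) :=
        mul_le_mul_of_nonneg_left (rpow_le_rpow_of_nonpos hm hQ (by linarith)) (by positivity)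

lemma abs_sub_le_of_hasDerivAt_uIcc {f f' : ℝ → ℝ} {C a b : ℝ}
    (hf : ∀ x ∈ uIcc a b, HasDerivAt f (f' x) x) (hC : ∀ x ∈ uIcc a b, |f' x| ≤ C) :
    |f b - f a| ≤ C * |b - a| := by
  simpa only [Real.norm_eq_abs] using (convex_uIcc a b).norm_image_sub_le_of_norm_hasDerivWithin_le
    (fun x hx => (hf x hx).hasDerivWithinAt) hC left_mem_uIcc right_mem_uIcc

lemma abs_sqgKernelDeriv_sub_le {β p q a b a' b' : ℝ} (hβ : 0 ≤ β) (hp : 0 < p) (hq : 0 < q)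
    (ha : p ≤ a) (ha' : p ≤ a') (hb : q ≤ b) (hb' : q ≤ b') :
    |sqgKernelDeriv β a' b' - sqgKernelDeriv β a b| ≤
      2 * β * (2 * β + 3) * (p ^ 2 + q ^ 2) ^ (-β - 1 / 2) * (|a' - a| + |b' - b|) := by
  have hm : 0 < p ^ 2 + q ^ 2 := by positivity
  have hsq : ∀ u v, p ≤ u → q ≤ v → p ^ 2 + q ^ 2 ≤ u ^ 2 + v ^ 2 := fun u v hu hv =>
    add_le_add (pow_le_pow_left₀ hp.le hu 2) (pow_le_pow_left₀ hq.le hv 2)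
  have hstep_a : |sqgKernelDeriv β a' b' - sqgKernelDeriv β a b'| ≤
      2 * β * (2 * β + 3) * (p ^ 2 + q ^ 2) ^ (-β - 1 / 2) * |a' - a| :=
    abs_sub_le_of_hasDerivAt_uIcc
      (fun u hu => hasDerivAt_sqgKernelDeriv β b' (hp.trans_le ((le_inf ha ha').trans hu.1)).ne')
      (fun u hu => abs_sqgKernelDeriv2_le hβ hm (hsq u b' ((le_inf ha ha').trans hu.1) hb'))
  have hstep_b : |sqgKernelDeriv β a b' - sqgKernelDeriv β a b| ≤
      2 * β * (2 * β + 3) * (p ^ 2 + q ^ 2) ^ (-β - 1 / 2) * |b' - b| := by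
    simp only [sqgKernelDeriv_comm β a]
    exact abs_sub_le_of_hasDerivAt_uIcc
      (fun v hv => hasDerivAt_sqgKernelDeriv β a (hq.trans_le ((le_inf hb hb').trans hv.1)).ne')
      (fun v hv => abs_sqgKernelDeriv2_le hβ hm
        ((hsq a v ha ((le_inf hb hb').trans hv.1)).trans_eq (add_comm _ _)))
  calc _ ≤ |sqgKernelDeriv β a' b' - sqgKernelDeriv β a b'| +
        |sqgKernelDeriv β a b' - sqgKernelDeriv β a b| := abs_sub_le _ _ _
    _ ≤ _ := by rw [mul_add]; exact add_le_add hstep_a hstep_b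

noncomputable def oddOddKernel (β y1 y2 x1 x2 : ℝ) : ℝ :=
  sqgKernel β (x1 - y1) (x2 - y2) - sqgKernel β (x1 + y1) (x2 - y2)
    - sqgKernel β (x1 - y1) (x2 + y2) + sqgKernel β (x1 + y1) (x2 + y2)

noncomputable def oddOddKernelDeriv (β y1 y2 s t : ℝ) : ℝ :=
  sqgKernelDeriv β (y1 - s) (y2 - t) + sqgKernelDeriv β (y1 + s) (y2 - t)
    + sqgKernelDeriv β (y1 - s) (y2 + t) + sqgKernelDeriv β (y1 + s) (y2 + t)

lemma oddOddKernel_zero_left (β y1 y2 x2 : ℝ) : oddOddKernel β y1 y2 0 x2 = 0 := by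
  simp only [oddOddKernel, zero_sub, zero_add, sqgKernel_neg_left]; ring

lemma oddOddKernelDeriv_zero (β y1 y2 : ℝ) :
    oddOddKernelDeriv β y1 y2 0 0 = -8 * β * y1 * y2 * (y1 ^ 2 + y2 ^ 2) ^ (-β - 1) := by
  simp only [oddOddKernelDeriv, sub_zero, add_zero, sqgKernelDeriv]; ring

lemma hasDerivAt_oddOddKernel (β y1 y2 x2 : ℝ) {s : ℝ} (h1 : s ≠ y1) (h2 : s ≠ -y1) :
    HasDerivAt (fun s => oddOddKernel β y1 y2 s x2) (oddOddKernelDeriv β y1 y2 s x2) s := by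
  have hm : s - y1 ≠ 0 := sub_ne_zero.mpr h1
  have hp : s + y1 ≠ 0 := by rwa [← sub_neg_eq_add, sub_ne_zero]
  have hd_sub : ∀ b, HasDerivAt (fun s => sqgKernel β (s - y1) b) (sqgKernelDeriv β (s - y1) b) s :=
    fun b => (hasDerivAt_sqgKernel β b hm).comp_sub_const s y1
  have hd_add : ∀ b, HasDerivAt (fun s => sqgKernel β (s + y1) b) (sqgKernelDeriv β (s + y1) b) s :=
    fun b => (hasDerivAt_sqgKernel β b hp).comp_add_const s y1
  refine (((hd_sub _).sub (hd_add _)).sub (hd_sub _) |>.add (hd_add _)).congr_deriv ?_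
  rw [show s - y1 = -(y1 - s) by ring, show x2 - y2 = -(y2 - x2) by ring, add_comm s,
    add_comm x2]
  simp only [oddOddKernelDeriv, sqgKernelDeriv_neg_left, sqgKernelDeriv_neg_right, neg_neg]
  ring

lemma abs_oddOddKernelDeriv_sub_le {β y1 y2 s t : ℝ} (hβ : 0 ≤ β) (hy1 : 0 < y1) (hy2 : 0 < y2)
    (hs : |s| ≤ y1 / 2) (ht : |t| ≤ y2 / 2) :
    |oddOddKernelDeriv β y1 y2 s t - oddOddKernelDeriv β y1 y2 0 0| ≤
      4 * (2 * β * (2 * β + 3) * ((y1 / 2) ^ 2 + (y2 / 2) ^ 2) ^ (-β - 1 / 2) * (|s| + |t|)) := by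
  have hcorner : ∀ u v, |u| = |s| → |v| = |t| →
      |sqgKernelDeriv β (y1 + u) (y2 + v) - sqgKernelDeriv β y1 y2| ≤
        2 * β * (2 * β + 3) * ((y1 / 2) ^ 2 + (y2 / 2) ^ 2) ^ (-β - 1 / 2) * (|s| + |t|) := by
    intro u v hu hv
    have hu' := neg_abs_le u
    have hv' := neg_abs_le v
    have := abs_sqgKernelDeriv_sub_le hβ (half_pos hy1) (half_pos hy2) (a' := y1 + u)
      (b' := y2 + v) (half_le_self hy1.le) (by linarith) (half_le_self hy2.le) (by linarith)
    rwa [add_sub_cancel_left, add_sub_cancel_left, hu, hv] at this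
  have h1 := hcorner (-s) (-t) (abs_neg s) (abs_neg t)
  have h2 := hcorner s (-t) rfl (abs_neg t)
  have h3 := hcorner (-s) t (abs_neg s) rfl
  have h4 := hcorner s t rfl rfl
  simp only [← sub_eq_add_neg] at h1 h2 h3
  simp only [oddOddKernelDeriv, sub_zero, add_zero]
  calc _ = |(sqgKernelDeriv β (y1 - s) (y2 - t) - sqgKernelDeriv β y1 y2)
          + (sqgKernelDeriv β (y1 + s) (y2 - t) - sqgKernelDeriv β y1 y2)
          + (sqgKernelDeriv β (y1 - s) (y2 + t) - sqgKernelDeriv β y1 y2)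
          + (sqgKernelDeriv β (y1 + s) (y2 + t) - sqgKernelDeriv β y1 y2)| := by ring_nf
    _ ≤ _ := by
      refine (le_of_eq_of_le (Real.norm_eq_abs _).symm norm_add₄_le).trans ?_
      simp only [Real.norm_eq_abs]
      linarith

lemma abs_oddOddKernel_sub_le {β y1 y2 x1 x2 : ℝ} (hβ : 0 ≤ β) (hy1 : 0 < y1) (hy2 : 0 < y2)
    (hx1 : 0 ≤ x1) (hx1y : x1 ≤ y1 / 2) (hx2 : |x2| ≤ y2 / 2) :
    |oddOddKernel β y1 y2 x1 x2 - x1 * oddOddKernelDeriv β y1 y2 0 0| ≤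
      4 * (2 * β * (2 * β + 3) * ((y1 / 2) ^ 2 + (y2 / 2) ^ 2) ^ (-β - 1 / 2) * (x1 + |x2|))
        * x1 := by
  have hmem : ∀ s ∈ uIcc 0 x1, 0 ≤ s ∧ s ≤ x1 := fun s hs => by
    rw [uIcc_of_le hx1] at hs; exact hs
  have := abs_sub_le_of_hasDerivAt_uIcc (a := 0) (b := x1)
    (C := 4 * (2 * β * (2 * β + 3) * ((y1 / 2) ^ 2 + (y2 / 2) ^ 2) ^ (-β - 1 / 2) * (x1 + |x2|)))
    (f := fun s => oddOddKernel β y1 y2 s x2 - s * oddOddKernelDeriv β y1 y2 0 0)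
    (fun s hs => by
      obtain ⟨hs0, hs1⟩ := hmem s hs
      exact (hasDerivAt_oddOddKernel β y1 y2 x2 (by linarith) (by linarith)).sub
        (hasDerivAt_mul_const _))
    (fun s hs => by
      obtain ⟨hs0, hs1⟩ := hmem s hs
      refine (abs_oddOddKernelDeriv_sub_le hβ hy1 hy2 (by rw [abs_of_nonneg hs0]; linarith)
        hx2).trans ?_
      gcongr
      rwa [abs_of_nonneg hs0])
  simpa [oddOddKernel_zero_left, abs_of_nonneg hx1] using this

lemma rpow_sq_half_add_sq_half {β y1 y2 : ℝ} (hS : 0 < y1 ^ 2 + y2 ^ 2) :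
    ((y1 / 2) ^ 2 + (y2 / 2) ^ 2) ^ (-β - 1 / 2) =
      4 ^ (β + 1 / 2) * √(y1 ^ 2 + y2 ^ 2) * (y1 ^ 2 + y2 ^ 2) ^ (-β - 1) := by
  rw [show (y1 / 2) ^ 2 + (y2 / 2) ^ 2 = (y1 ^ 2 + y2 ^ 2) / 4 by ring,
    div_rpow hS.le (by norm_num), show -β - 1 / 2 = -(β + 1 / 2) by ring,
    rpow_neg (by norm_num : (0 : ℝ) ≤ 4), show -(β + 1 / 2) = 1 / 2 + (-β - 1) by ring,
    rpow_add hS, sqrt_eq_rpow]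
  field_simp

lemma mul_sqrt_sq_add_sq_le {L r x1 x2 y1 y2 : ℝ} (hL : 0 ≤ L) (hr : 0 ≤ r) (hx1 : x1 ≤ r)
    (hx2 : x2 ≤ r) (hy1 : L * r ≤ y1) (hy2 : L * r ≤ y2) (hy1' : 0 ≤ y1) (hy2' : 0 ≤ y2) :
    (x1 + x2) * √(y1 ^ 2 + y2 ^ 2) * L ≤ 4 * (y1 * y2) := by
  have hsqrt : √(y1 ^ 2 + y2 ^ 2) ≤ y1 + y2 :=
    sqrt_le_iff.mpr ⟨by positivity, by nlinarith⟩
  calc (x1 + x2) * √(y1 ^ 2 + y2 ^ 2) * L ≤ (2 * r) * (y1 + y2) * L :=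
        mul_le_mul_of_nonneg_right (mul_le_mul (by linarith) hsqrt (sqrt_nonneg _) (by linarith)) hL
    _ = 2 * ((L * r) * y2 + (L * r) * y1) := by ring
    _ ≤ 2 * (y1 * y2 + y2 * y1) := by gcongr
    _ = 4 * (y1 * y2) := by ring

lemma exists_oddOddKernel_eq_mul_one_add {β L x1 x2 y1 y2 : ℝ} (hβ : 0 < β) (hL : 2 ≤ L)
    (hx1 : 0 < x1) (hx2 : 0 < x2) (hy1 : L * √(x1 ^ 2 + x2 ^ 2) ≤ y1)
    (hy2 : L * √(x1 ^ 2 + x2 ^ 2) ≤ y2) :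
    ∃ f1 : ℝ, |f1| ≤ 4 * (2 * β + 3) * 4 ^ (β + 1 / 2) / L ∧
      oddOddKernel β y1 y2 x1 x2 =
        -8 * β * x1 * y1 * y2 * (y1 ^ 2 + y2 ^ 2) ^ (-β - 1) * (1 + f1) := by
  set r := √(x1 ^ 2 + x2 ^ 2)
  have hx1r : x1 ≤ r := le_sqrt_of_sq_le (by nlinarith)
  have hx2r : x2 ≤ r := le_sqrt_of_sq_le (by nlinarith)
  have h2x1 : 2 * x1 ≤ y1 := by nlinarith
  have h2x2 : 2 * x2 ≤ y2 := by nlinarith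
  have hy1p : 0 < y1 := by linarith
  have hy2p : 0 < y2 := by linarith
  have hS : 0 < y1 ^ 2 + y2 ^ 2 := by positivity
  set K := oddOddKernel β y1 y2 x1 x2
  set C := x1 * oddOddKernelDeriv β y1 y2 0 0 with hC_def
  have hC : C = -8 * β * x1 * y1 * y2 * (y1 ^ 2 + y2 ^ 2) ^ (-β - 1) := by
    rw [hC_def, oddOddKernelDeriv_zero]; ring
  have hCneg : C < 0 := by
    rw [hC]
    have : 0 < β * x1 * y1 * y2 * (y1 ^ 2 + y2 ^ 2) ^ (-β - 1) := by positivity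
    linarith
  have herr := abs_oddOddKernel_sub_le (x2 := x2) hβ.le hy1p hy2p hx1.le (by linarith)
    (by rw [abs_of_pos hx2]; linarith)
  refine ⟨(K - C) / C, ?_, by rw [← hC, mul_add, mul_one, mul_div_cancel₀ _ hCneg.ne]; ring⟩
  rw [abs_div, div_le_div_iff₀ (abs_pos.mpr hCneg.ne) (by linarith), abs_of_neg hCneg]
  calc |K - C| * L
      ≤ 4 * (2 * β * (2 * β + 3) * ((y1 / 2) ^ 2 + (y2 / 2) ^ 2) ^ (-β - 1 / 2) * (x1 + |x2|))
          * x1 * L := by gcongr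
    _ = 8 * β * (2 * β + 3) * 4 ^ (β + 1 / 2) * (y1 ^ 2 + y2 ^ 2) ^ (-β - 1) * x1
          * ((x1 + x2) * √(y1 ^ 2 + y2 ^ 2) * L) := by
        rw [rpow_sq_half_add_sq_half hS, abs_of_pos hx2]; ring
    _ ≤ 8 * β * (2 * β + 3) * 4 ^ (β + 1 / 2) * (y1 ^ 2 + y2 ^ 2) ^ (-β - 1) * x1
          * (4 * (y1 * y2)) := by
        refine mul_le_mul_of_nonneg_left ?_ (by positivity)
        exact mul_sqrt_sq_add_sq_le (by linarith) (sqrt_nonneg _) hx1r hx2r hy1 hy2 hy1p.le hy2p.le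
    _ = 4 * (2 * β + 3) * 4 ^ (β + 1 / 2) * -C := by rw [hC]; ring

theorem stmt_7_general (α : ℝ) (hα : 0 < α) :
    ∃ A > 0, ∃ L0 : ℝ, 2 ≤ L0 ∧ ∀ L : ℝ, L0 ≤ L →
      ∀ x1 x2 y1 y2 : ℝ, 0 < x1 → 0 < x2 →
        L * Real.sqrt (x1 ^ 2 + x2 ^ 2) ≤ y1 →
        L * Real.sqrt (x1 ^ 2 + x2 ^ 2) ≤ y2 →
        ∃ f1 : ℝ, |f1| ≤ A / L ∧
          (x2 - y2) / (Real.sqrt ((x1 - y1) ^ 2 + (x2 - y2) ^ 2)) ^ (2 + 2 * α)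
            - (x2 - y2) / (Real.sqrt ((x1 + y1) ^ 2 + (x2 - y2) ^ 2)) ^ (2 + 2 * α)
            - (x2 + y2) / (Real.sqrt ((x1 - y1) ^ 2 + (x2 + y2) ^ 2)) ^ (2 + 2 * α)
            + (x2 + y2) / (Real.sqrt ((x1 + y1) ^ 2 + (x2 + y2) ^ 2)) ^ (2 + 2 * α)
          = -8 * (1 + α) * x1 * y1 * y2
              * (Real.sqrt (y1 ^ 2 + y2 ^ 2)) ^ (-4 - 2 * α) * (1 + f1) := by
  refine ⟨4 * (2 * (1 + α) + 3) * 4 ^ ((1 + α) + 1 / 2), by positivity, 2, le_rfl,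
    fun L hL x1 x2 y1 y2 hx1 hx2 hy1 hy2 => ?_⟩
  obtain ⟨f1, hf1, hK⟩ :=
    exists_oddOddKernel_eq_mul_one_add (β := 1 + α) (by linarith) hL hx1 hx2 hy1 hy2
  refine ⟨f1, hf1, ?_⟩
  have hnorm : √(y1 ^ 2 + y2 ^ 2) ^ (-4 - 2 * α) = (y1 ^ 2 + y2 ^ 2) ^ (-(1 + α) - 1) := by
    rw [← rpow_div_two_eq_sqrt _ (by positivity)]; ring_nf
  rw [show 2 + 2 * α = 2 * (1 + α) by ring, hnorm]
  simp only [div_sqrt_rpow_eq_sqgKernel]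
  exact hK

/-- pointwise asymptotics for the symmetrized kernel K₁ (equation (2.16)). -/
theorem stmt_7 (α : ℝ) (hα : 0 < α) (hα1 : α < 1) :
    ∃ A > 0, ∃ L0 : ℝ, 2 ≤ L0 ∧ ∀ L : ℝ, L0 ≤ L →
      ∀ x1 x2 y1 y2 : ℝ, 0 < x1 → 0 < x2 →
        L * Real.sqrt (x1 ^ 2 + x2 ^ 2) ≤ y1 →
        L * Real.sqrt (x1 ^ 2 + x2 ^ 2) ≤ y2 →
        ∃ f1 : ℝ, |f1| ≤ A / L ∧
          (x2 - y2) / (Real.sqrt ((x1 - y1) ^ 2 + (x2 - y2) ^ 2)) ^ (2 + 2 * α)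
            - (x2 - y2) / (Real.sqrt ((x1 + y1) ^ 2 + (x2 - y2) ^ 2)) ^ (2 + 2 * α)
            - (x2 + y2) / (Real.sqrt ((x1 - y1) ^ 2 + (x2 + y2) ^ 2)) ^ (2 + 2 * α)
            + (x2 + y2) / (Real.sqrt ((x1 + y1) ^ 2 + (x2 + y2) ^ 2)) ^ (2 + 2 * α)
          = -8 * (1 + α) * x1 * y1 * y2
              * (Real.sqrt (y1 ^ 2 + y2 ^ 2)) ^ (-4 - 2 * α) * (1 + f1) :=
  stmt_7_general α hα
end

section
/- Let α ∈ (0,1). There exist universal constants A and L₀ ≥ 2 such that for all L ≥ L₀ and all x, y ∈ ℝ² with x₁, x₂ > 0, y₁ ≥ L|x|, y₂ ≥ L|x|: the kernel K₂(x,y) = −[(x₁−y₁)/|x−y|^{2+2α} − (x₁−y₁)/|x̄−y|^{2+2α} − (x₁+y₁)/|x̃−y|^{2+2α} + (x₁+y₁)/|x+y|^{2+2α}] satisfies K₂(x,y) = 8(1+α) x₂ y₁ y₂ |y|^{−4−2α} (1 + f₂(x,y)) with |f₂(x,y)| ≤ A L^{−1}. -/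
/-!
With `a = y₁ ∓ x₁`, the kernel is the sum over both signs of the differences
`φₐ(y₂ - x₂) - φₐ(y₂ + x₂)` of the profile `φₐ(t) = a (a² + t²)^(-1-α)`, whose derivative is
`-2(1+α) a t (a² + t²)^(-2-α)`. By the mean value theorem each difference equals
`4(1+α) x₂ · a c (a² + c²)^(-2-α)` for some `c` within `x₂` of `y₂`. As `x₁ ≤ y₁ / L` and
`x₂ ≤ y₂ / L`, each coordinate of `(a, c)` is within relative distance `1/L` of that of `y`, so
`a c (a² + c²)^(-2-α) = y₁ y₂ |y|^(-4-2α) (1 + O(1/L))`, uniformly in `α ∈ (0, 1)` because the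
exponent stays in `[-3, 0]`.
-/

open Real Set

lemma sqrt_rpow_two_add_two_mul {u : ℝ} (hu : 0 ≤ u) (s : ℝ) :
    √u ^ (2 + 2 * s) = u ^ (1 + s) := by
  rw [← rpow_div_two_eq_sqrt _ hu]
  ring_nf

lemma sqrt_rpow_neg_four_sub_two_mul {u : ℝ} (hu : 0 ≤ u) (s : ℝ) :
    √u ^ (-4 - 2 * s) = u ^ (-2 - s) := by
  rw [← rpow_div_two_eq_sqrt _ hu]
  ring_nf

section Profile

variable (α : ℝ) {a : ℝ}

lemma hasDerivAt_div_sq_add_sq_rpow (ha : a ≠ 0) (t : ℝ) :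
    HasDerivAt (fun t : ℝ => a / (a ^ 2 + t ^ 2) ^ (1 + α))
      (-(2 * (1 + α) * a * t * (a ^ 2 + t ^ 2) ^ (-2 - α))) t := by
  have hpos : 0 < a ^ 2 + t ^ 2 := by positivity
  have hbase : HasDerivAt (fun t : ℝ => a ^ 2 + t ^ 2) (2 * t) t := by
    simpa using (hasDerivAt_pow 2 t).const_add (a ^ 2)
  refine ((hasDerivAt_const t a).div (hbase.rpow_const (p := 1 + α) (Or.inl hpos.ne'))
    (by positivity)).congr_deriv ?_
  have hsq : ((a ^ 2 + t ^ 2) ^ (1 + α)) ^ 2 = (a ^ 2 + t ^ 2) ^ (2 + 2 * α) := by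
    rw [sq, ← rpow_add hpos]; ring_nf
  have hquot : (a ^ 2 + t ^ 2) ^ (-2 - α)
      = (a ^ 2 + t ^ 2) ^ (1 + α - 1) / (a ^ 2 + t ^ 2) ^ (2 + 2 * α) := by
    rw [← rpow_sub hpos]; ring_nf
  rw [hsq, hquot]
  ring

lemma exists_div_sq_add_sq_rpow_sub_eq (ha : a ≠ 0) (t : ℝ) {h : ℝ} (hh : 0 < h) :
    ∃ c, |c - t| ≤ h ∧
      a / (a ^ 2 + (t - h) ^ 2) ^ (1 + α) - a / (a ^ 2 + (t + h) ^ 2) ^ (1 + α)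
        = 4 * (1 + α) * h * (a * c * (a ^ 2 + c ^ 2) ^ (-2 - α)) := by
  obtain ⟨c, ⟨hc_lo, hc_hi⟩, hslope⟩ := exists_hasDerivAt_eq_slope _ _
    (by linarith : t - h < t + h)
    (fun s _ => (hasDerivAt_div_sq_add_sq_rpow α ha s).continuousAt.continuousWithinAt)
    (fun s _ => hasDerivAt_div_sq_add_sq_rpow α ha s)
  refine ⟨c, abs_sub_le_iff.2 ⟨by linarith, by linarith⟩, ?_⟩
  rw [show t + h - (t - h) = 2 * h by ring, eq_div_iff (by positivity)] at hslope
  linear_combination hslope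

end Profile

section RelativeBounds

variable {p r : ℝ}

lemma rpow_sq_one_sub_le (hp : -3 ≤ p) (hr0 : 0 ≤ r) (hr : r ≤ 1 / 10) :
    ((1 - r) ^ 2) ^ p ≤ 1 + 15 * r := by
  have hbase : 0 < (1 - r) ^ 2 := by nlinarith
  have hcube : ((1 - r) ^ 2) ^ (-3 : ℝ) = ((1 - r) ^ 6)⁻¹ := by
    rw [show (-3 : ℝ) = -((3 : ℕ) : ℝ) by norm_num, rpow_neg hbase.le, rpow_natCast,
      ← pow_mul]
  have hbernoulli : 1 - 6 * r ≤ (1 - r) ^ 6 := by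
    simpa [sub_eq_add_neg] using one_add_mul_le_pow (by linarith : (-2 : ℝ) ≤ -r) 6
  calc ((1 - r) ^ 2) ^ p ≤ ((1 - r) ^ 2) ^ (-3 : ℝ) :=
        rpow_le_rpow_of_exponent_ge hbase (by nlinarith) hp
    _ = ((1 - r) ^ 6)⁻¹ := hcube
    _ ≤ 1 + 15 * r := by
        rw [inv_le_iff_one_le_mul₀ (pow_pos (by linarith) 6)]
        nlinarith [mul_le_mul_of_nonneg_left hbernoulli (by linarith : (0 : ℝ) ≤ 1 + 15 * r)]

lemma one_sub_le_rpow_sq_one_add (hp : -3 ≤ p) (hr0 : 0 ≤ r) (hr : r ≤ 1 / 10) :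
    1 - 6 * r ≤ ((1 + r) ^ 2) ^ p := by
  have hbase : 1 ≤ (1 + r) ^ 2 := by nlinarith
  have hcube : ((1 + r) ^ 2) ^ (-3 : ℝ) = ((1 + r) ^ 6)⁻¹ := by
    rw [show (-3 : ℝ) = -((3 : ℕ) : ℝ) by norm_num, rpow_neg (by positivity), rpow_natCast,
      ← pow_mul]
  calc 1 - 6 * r ≤ ((1 + r) ^ 6)⁻¹ := by
        rw [le_inv_comm₀ (by linarith) (by positivity), ← one_div, le_div_iff₀ (by linarith)]
        nlinarith [pow_nonneg hr0 2, pow_nonneg hr0 3, pow_nonneg hr0 4,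
          pow_nonneg hr0 5, pow_nonneg hr0 6, pow_nonneg hr0 7]
    _ = ((1 + r) ^ 2) ^ (-3 : ℝ) := hcube.symm
    _ ≤ ((1 + r) ^ 2) ^ p := rpow_le_rpow_of_exponent_le hbase hp

lemma rpow_mem_Icc_of_sq_bounds (hp : -3 ≤ p) (hp0 : p ≤ 0) (hr0 : 0 ≤ r) (hr : r ≤ 1 / 10)
    {q s : ℝ} (hs : 0 < s) (hlo : (1 - r) ^ 2 * s ≤ q) (hhi : q ≤ (1 + r) ^ 2 * s) :
    q ^ p ∈ Icc ((1 - 6 * r) * s ^ p) ((1 + 15 * r) * s ^ p) := by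
  have hsp : 0 ≤ s ^ p := rpow_nonneg hs.le p
  have hlo' : 0 < (1 - r) ^ 2 * s := mul_pos (pow_pos (by linarith) 2) hs
  constructor
  · calc (1 - 6 * r) * s ^ p ≤ ((1 + r) ^ 2) ^ p * s ^ p :=
          mul_le_mul_of_nonneg_right (one_sub_le_rpow_sq_one_add hp hr0 hr) hsp
      _ = ((1 + r) ^ 2 * s) ^ p := (mul_rpow (by positivity) hs.le).symm
      _ ≤ q ^ p := rpow_le_rpow_of_nonpos (hlo'.trans_le hlo) hhi hp0
  · calc q ^ p ≤ ((1 - r) ^ 2 * s) ^ p := rpow_le_rpow_of_nonpos hlo' hlo hp0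
      _ = ((1 - r) ^ 2) ^ p * s ^ p := mul_rpow (by positivity) hs.le
      _ ≤ (1 + 15 * r) * s ^ p :=
          mul_le_mul_of_nonneg_right (rpow_sq_one_sub_le hp hr0 hr) hsp

lemma abs_mul_mul_rpow_sub_le (hp : -3 ≤ p) (hp0 : p ≤ 0) (hr0 : 0 ≤ r) (hr : r ≤ 1 / 10)
    {a c y₁ y₂ : ℝ} (hy₁ : 0 < y₁) (hy₂ : 0 < y₂)
    (ha : |a - y₁| ≤ r * y₁) (hc : |c - y₂| ≤ r * y₂) :
    |a * c * (a ^ 2 + c ^ 2) ^ p - y₁ * y₂ * (y₁ ^ 2 + y₂ ^ 2) ^ p|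
      ≤ 25 * r * (y₁ * y₂ * (y₁ ^ 2 + y₂ ^ 2) ^ p) := by
  have ha_ge : (1 - r) * y₁ ≤ a := by linarith [(abs_sub_le_iff.1 ha).2]
  have ha_le : a ≤ (1 + r) * y₁ := by linarith [(abs_sub_le_iff.1 ha).1]
  have hc_ge : (1 - r) * y₂ ≤ c := by linarith [(abs_sub_le_iff.1 hc).2]
  have hc_le : c ≤ (1 + r) * y₂ := by linarith [(abs_sub_le_iff.1 hc).1]
  have ha0 : 0 ≤ (1 - r) * y₁ := mul_nonneg (by linarith) hy₁.le
  have hc0 : 0 ≤ (1 - r) * y₂ := mul_nonneg (by linarith) hy₂.le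
  have hac_lo : (1 - r) ^ 2 * (y₁ * y₂) ≤ a * c := by
    nlinarith [mul_le_mul ha_ge hc_ge hc0 (ha0.trans ha_ge)]
  have hac_hi : a * c ≤ (1 + r) ^ 2 * (y₁ * y₂) := by
    nlinarith [mul_le_mul ha_le hc_le (hc0.trans hc_ge) (by positivity)]
  have hS : 0 < y₁ ^ 2 + y₂ ^ 2 := by positivity
  obtain ⟨hQ_lo, hQ_hi⟩ := rpow_mem_Icc_of_sq_bounds (q := a ^ 2 + c ^ 2) hp hp0 hr0 hr hS
    (by nlinarith [mul_self_le_mul_self ha0 ha_ge, mul_self_le_mul_self hc0 hc_ge])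
    (by nlinarith [mul_self_le_mul_self (ha0.trans ha_ge) ha_le,
      mul_self_le_mul_self (hc0.trans hc_ge) hc_le])
  have hP : 0 ≤ y₁ * y₂ * (y₁ ^ 2 + y₂ ^ 2) ^ p := by positivity
  have hlower : (1 - r) ^ 2 * (1 - 6 * r) * (y₁ * y₂ * (y₁ ^ 2 + y₂ ^ 2) ^ p)
      ≤ a * c * (a ^ 2 + c ^ 2) ^ p := by
    have := mul_le_mul hac_lo hQ_lo (mul_nonneg (by linarith) (rpow_nonneg hS.le p))
      ((by positivity : (0 : ℝ) ≤ (1 - r) ^ 2 * (y₁ * y₂)).trans hac_lo)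
    linarith
  have hupper : a * c * (a ^ 2 + c ^ 2) ^ p
      ≤ (1 + r) ^ 2 * (1 + 15 * r) * (y₁ * y₂ * (y₁ ^ 2 + y₂ ^ 2) ^ p) := by
    have := mul_le_mul hac_hi hQ_hi (rpow_nonneg (by positivity) p) (by positivity)
    linarith
  have hr_cube : r ^ 3 ≤ r ^ 2 / 10 := by
    nlinarith [mul_nonneg (sq_nonneg r) (by linarith : 0 ≤ 1 / 10 - r)]
  have hcoef_lo : 1 - 25 * r ≤ (1 - r) ^ 2 * (1 - 6 * r) := by nlinarith
  have hcoef_hi : (1 + r) ^ 2 * (1 + 15 * r) ≤ 1 + 25 * r := by nlinarith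
  rw [abs_sub_le_iff]
  constructor
  · linarith [mul_le_mul_of_nonneg_right hcoef_hi hP]
  · linarith [mul_le_mul_of_nonneg_right hcoef_lo hP]

end RelativeBounds

lemma exists_add_eq_two_mul_one_add {u w v δ : ℝ} (hv : 0 < v)
    (hu : |u - v| ≤ δ * v) (hw : |w - v| ≤ δ * v) :
    ∃ f, |f| ≤ δ ∧ u + w = 2 * v * (1 + f) := by
  refine ⟨(u + w) / (2 * v) - 1, ?_, by field_simp; ring⟩
  rw [show (u + w) / (2 * v) - 1 = ((u - v) + (w - v)) / (2 * v) by field_simp; ring,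
    abs_div, abs_of_pos (by positivity : (0 : ℝ) < 2 * v), div_le_iff₀ (by positivity)]
  linarith [abs_add_le (u - v) (w - v)]

section Kernel

variable {α r x₁ x₂ y₁ y₂ : ℝ}

lemma kernel_eq_sum_sub :
    -((x₁ - y₁) / √((x₁ - y₁) ^ 2 + (x₂ - y₂) ^ 2) ^ (2 + 2 * α)
      - (x₁ - y₁) / √((x₁ - y₁) ^ 2 + (x₂ + y₂) ^ 2) ^ (2 + 2 * α)
      - (x₁ + y₁) / √((x₁ + y₁) ^ 2 + (x₂ - y₂) ^ 2) ^ (2 + 2 * α)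
      + (x₁ + y₁) / √((x₁ + y₁) ^ 2 + (x₂ + y₂) ^ 2) ^ (2 + 2 * α))
    = ((y₁ - x₁) / ((y₁ - x₁) ^ 2 + (y₂ - x₂) ^ 2) ^ (1 + α)
        - (y₁ - x₁) / ((y₁ - x₁) ^ 2 + (y₂ + x₂) ^ 2) ^ (1 + α))
      + ((y₁ + x₁) / ((y₁ + x₁) ^ 2 + (y₂ - x₂) ^ 2) ^ (1 + α)
        - (y₁ + x₁) / ((y₁ + x₁) ^ 2 + (y₂ + x₂) ^ 2) ^ (1 + α)) := by
  simp only [sqrt_rpow_two_add_two_mul (add_nonneg (sq_nonneg _) (sq_nonneg _))]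
  ring_nf

lemma exists_kernel_eq_mul_one_add (hα0 : -2 ≤ α) (hα1 : α ≤ 1) (hr0 : 0 ≤ r)
    (hr : r ≤ 1 / 10) (hx₁ : 0 < x₁) (hx₂ : 0 < x₂) (hxy₁ : x₁ ≤ r * y₁) (hxy₂ : x₂ ≤ r * y₂) :
    ∃ f₂ : ℝ, |f₂| ≤ 25 * r ∧
      -((x₁ - y₁) / √((x₁ - y₁) ^ 2 + (x₂ - y₂) ^ 2) ^ (2 + 2 * α)
        - (x₁ - y₁) / √((x₁ - y₁) ^ 2 + (x₂ + y₂) ^ 2) ^ (2 + 2 * α)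
        - (x₁ + y₁) / √((x₁ + y₁) ^ 2 + (x₂ - y₂) ^ 2) ^ (2 + 2 * α)
        + (x₁ + y₁) / √((x₁ + y₁) ^ 2 + (x₂ + y₂) ^ 2) ^ (2 + 2 * α))
      = 8 * (1 + α) * x₂ * y₁ * y₂ * √(y₁ ^ 2 + y₂ ^ 2) ^ (-4 - 2 * α) * (1 + f₂) := by
  have hy₁ : 0 < y₁ := by nlinarith
  have hy₂ : 0 < y₂ := by nlinarith
  obtain ⟨c₁, hc₁, hdiff₁⟩ :=
    exists_div_sq_add_sq_rpow_sub_eq α (a := y₁ - x₁) (by nlinarith) y₂ hx₂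
  obtain ⟨c₂, hc₂, hdiff₂⟩ :=
    exists_div_sq_add_sq_rpow_sub_eq α (a := y₁ + x₁) (by linarith) y₂ hx₂
  have hclose₁ := abs_mul_mul_rpow_sub_le (p := -2 - α) (by linarith) (by linarith) hr0 hr
    hy₁ hy₂ (by rwa [sub_sub_cancel_left, abs_neg, abs_of_pos hx₁]) (hc₁.trans hxy₂)
  have hclose₂ := abs_mul_mul_rpow_sub_le (p := -2 - α) (by linarith) (by linarith) hr0 hr
    hy₁ hy₂ (by rwa [add_sub_cancel_left, abs_of_pos hx₁]) (hc₂.trans hxy₂)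
  obtain ⟨f₂, hf₂, hsum⟩ := exists_add_eq_two_mul_one_add (by positivity) hclose₁ hclose₂
  refine ⟨f₂, hf₂, ?_⟩
  rw [kernel_eq_sum_sub, hdiff₁, hdiff₂,
    sqrt_rpow_neg_four_sub_two_mul (add_nonneg (sq_nonneg _) (sq_nonneg _))]
  linear_combination 4 * (1 + α) * x₂ * hsum

end Kernel

/-- pointwise asymptotics for the symmetrized kernel K₂ (equation (2.17)). -/
theorem stmt_8 (α : ℝ) (hα : 0 < α) (hα1 : α < 1) :
    ∃ A > 0, ∃ L0 : ℝ, 2 ≤ L0 ∧ ∀ L : ℝ, L0 ≤ L →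
      ∀ x1 x2 y1 y2 : ℝ, 0 < x1 → 0 < x2 →
        L * Real.sqrt (x1 ^ 2 + x2 ^ 2) ≤ y1 →
        L * Real.sqrt (x1 ^ 2 + x2 ^ 2) ≤ y2 →
        ∃ f2 : ℝ, |f2| ≤ A / L ∧
          -((x1 - y1) / (Real.sqrt ((x1 - y1) ^ 2 + (x2 - y2) ^ 2)) ^ (2 + 2 * α)
            - (x1 - y1) / (Real.sqrt ((x1 - y1) ^ 2 + (x2 + y2) ^ 2)) ^ (2 + 2 * α)
            - (x1 + y1) / (Real.sqrt ((x1 + y1) ^ 2 + (x2 - y2) ^ 2)) ^ (2 + 2 * α)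
            + (x1 + y1) / (Real.sqrt ((x1 + y1) ^ 2 + (x2 + y2) ^ 2)) ^ (2 + 2 * α))
          = 8 * (1 + α) * x2 * y1 * y2
              * (Real.sqrt (y1 ^ 2 + y2 ^ 2)) ^ (-4 - 2 * α) * (1 + f2) := by
  refine ⟨25, by norm_num, 10, by norm_num, fun L hL x1 x2 y1 y2 hx1 hx2 hy1 hy2 => ?_⟩
  have hL0 : 0 < L := by linarith
  have hL_inv : L⁻¹ ≤ 1 / 10 := by rw [one_div]; exact inv_anti₀ (by norm_num) hL
  have h_le_inv_mul {x y : ℝ} (hx : x ^ 2 ≤ x1 ^ 2 + x2 ^ 2)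
      (hy : L * √(x1 ^ 2 + x2 ^ 2) ≤ y) : x ≤ L⁻¹ * y := by
    rw [inv_mul_eq_div, le_div_iff₀ hL0, mul_comm]
    exact (mul_le_mul_of_nonneg_left (le_sqrt_of_sq_le hx) hL0.le).trans hy
  obtain ⟨f2, hf2, hK⟩ := exists_kernel_eq_mul_one_add (α := α) (by linarith) hα1.le
    (inv_nonneg.2 hL0.le) hL_inv hx1 hx2 (h_le_inv_mul (by nlinarith) hy1)
    (h_le_inv_mul (by nlinarith) hy2)
  exact ⟨f2, by rwa [div_eq_mul_inv], hK⟩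
end

section
/- Let δ ∈ (0,1), and let ω : [0,π)² → [0,1] satisfy ω(y) = 1 except on a set of measure at most 4πδ. Let c₀ > 0 and suppose g(y) = y₁y₂|y|^{−4−2α} with α ∈ (0,1). Then there exist universal constants M and c > 0 (depending only on α) such that for all sufficiently small δ, ∫_{[0,π)² \ [0,Mδ^{1/2}]²} g(y) ω(y) dy ≥ c δ^{−α}. -/
open Real MeasureTheory

/-!
The kernel `y₁ y₂ |y|^(-4-2α)` is of size `δ^(-1-α)` on the square `(a, 2a]²` with
`a = 4√δ`, which has area `16δ`. The exceptional set has measure at most `4πδ < 13δ`, so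
`ω = 1` on a part of that square of measure at least `3δ`; as the integrand is nonnegative,
the integral over the whole domain is at least `3δ · δ^(-1-α) ≳ δ^(-α)`.
-/

namespace MeasureTheory

variable {X : Type*} [MeasurableSpace X] {μ : Measure X}

theorem measureReal_sub_le_measureReal_inter {R T G : Set X} {ε : ℝ} (hG : MeasurableSet G)
    (hRT : R ⊆ T) (hR : μ R ≠ ⊤) (hε : 0 ≤ ε) (hbad : μ (T \ G) ≤ ENNReal.ofReal ε) :
    μ.real R - ε ≤ μ.real (R ∩ G) := by
  have hRG : μ.real (R \ G) ≤ ε :=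
    ENNReal.toReal_le_of_le_ofReal hε <|
      (measure_mono (Set.sdiff_subset_sdiff_left hRT)).trans hbad
  linarith [measureReal_inter_add_sdiff (μ := μ) (s := R) hG hR]

theorem mul_measureReal_le_setIntegral {f : X → ℝ} {S T : Set X} {m : ℝ}
    (hS : MeasurableSet S) (hT : MeasurableSet T) (hTS : T ⊆ S) (hμT : μ T ≠ ⊤)
    (hf : IntegrableOn f S μ) (hf_nonneg : ∀ x ∈ S, 0 ≤ f x) (hm : ∀ x ∈ T, m ≤ f x) :
    m * μ.real T ≤ ∫ x in S, f x ∂μ :=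
  (setIntegral_ge_of_const_le_real hT hμT hm (hf.mono_set hTS)).trans <|
    setIntegral_mono_set hf ((ae_restrict_mem hS).mono hf_nonneg) hTS.eventuallyLE

end MeasureTheory

/-- The paper's `g` is `kernel (-4 - 2 * α)`. -/
noncomputable def kernel (e : ℝ) (y : ℝ × ℝ) : ℝ :=
  y.1 * y.2 * √(y.1 ^ 2 + y.2 ^ 2) ^ e

section kernel

variable {e a b : ℝ} {y : ℝ × ℝ}

@[fun_prop]
theorem measurable_kernel : Measurable (kernel e) := by
  unfold kernel; fun_prop

theorem kernel_nonneg (hy₁ : 0 ≤ y.1) (hy₂ : 0 ≤ y.2) : 0 ≤ kernel e y := by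
  unfold kernel; positivity

theorem kernel_le_of_mem_square_diff (he : e ≤ 0) (ha : 0 < a)
    (hy : y ∈ (Set.Ico 0 b ×ˢ Set.Ico 0 b) \ (Set.Icc 0 a ×ˢ Set.Icc 0 a)) :
    kernel e y ≤ b ^ 2 * a ^ e := by
  obtain ⟨⟨⟨hy₁, hy₁b⟩, hy₂, hy₂b⟩, hout⟩ := hy
  have hfar : a ≤ √(y.1 ^ 2 + y.2 ^ 2) := by
    refine Real.le_sqrt_of_sq_le ?_
    by_cases h : y.1 ≤ a
    · have : a < y.2 := not_le.1 fun h' ↦ hout ⟨⟨hy₁, h⟩, hy₂, h'⟩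
      nlinarith
    · nlinarith
  have hprod : y.1 * y.2 ≤ b ^ 2 := by nlinarith
  exact mul_le_mul hprod (rpow_le_rpow_of_nonpos ha hfar he) (by positivity) (by positivity)

theorem le_kernel_of_mem_Ioc_square (he : e ≤ 0) (ha : 0 < a)
    (hy : y ∈ Set.Ioc a (2 * a) ×ˢ Set.Ioc a (2 * a)) :
    a ^ 2 * (3 * a) ^ e ≤ kernel e y := by
  obtain ⟨⟨hy₁, hy₁a⟩, hy₂, hy₂a⟩ := hy
  have hnear : √(y.1 ^ 2 + y.2 ^ 2) ≤ 3 * a :=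
    Real.sqrt_le_iff.2 ⟨by positivity, by nlinarith⟩
  have hprod : a ^ 2 ≤ y.1 * y.2 := by nlinarith
  have hpos : 0 < √(y.1 ^ 2 + y.2 ^ 2) := Real.sqrt_pos.2 (by nlinarith)
  exact mul_le_mul hprod (rpow_le_rpow_of_nonpos hpos hnear he) (by positivity) (by nlinarith)

theorem integrableOn_kernel_mul {ω : ℝ × ℝ → ℝ} (he : e ≤ 0) (ha : 0 < a)
    (hω : Measurable ω) (hω_le : ∀ y ∈ Set.Ico 0 b ×ˢ Set.Ico 0 b, |ω y| ≤ 1) :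
    IntegrableOn (fun y ↦ kernel e y * ω y)
      ((Set.Ico 0 b ×ˢ Set.Ico 0 b) \ (Set.Icc 0 a ×ˢ Set.Icc 0 a)) := by
  refine Measure.integrableOn_of_bounded (M := b ^ 2 * a ^ e) ?_ (by fun_prop) ?_
  · refine ne_top_of_le_ne_top ?_ (measure_mono Set.sdiff_subset)
    simp [Measure.volume_eq_prod, Measure.prod_prod, ENNReal.mul_eq_top]
  · filter_upwards [ae_restrict_mem (by measurability)] with y hy
    have hk := kernel_nonneg (e := e) hy.1.1.1 hy.1.2.1
    rw [norm_mul, Real.norm_of_nonneg hk, Real.norm_eq_abs]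
    exact mul_le_of_le_one_right hk (hω_le y hy.1) |>.trans
      (kernel_le_of_mem_square_diff he ha hy)

section square

variable {ω : ℝ × ℝ → ℝ}

theorem volume_Ioc_square (ha : 0 ≤ a) :
    volume (Set.Ioc a (2 * a) ×ˢ Set.Ioc a (2 * a)) = ENNReal.ofReal (a ^ 2) := by
  rw [Measure.volume_eq_prod, Measure.prod_prod, Real.volume_Ioc,
    ← ENNReal.ofReal_mul (by linarith)]
  ring_nf

theorem Ioc_square_subset_square_diff (hab : 2 * a < b) :
    Set.Ioc a (2 * a) ×ˢ Set.Ioc a (2 * a) ⊆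
      (Set.Ico 0 b ×ˢ Set.Ico 0 b) \ (Set.Icc 0 a ×ˢ Set.Icc 0 a) :=
  fun _ ⟨⟨hy₁, hy₁a⟩, hy₂, hy₂a⟩ ↦
    ⟨⟨⟨by linarith, by linarith⟩, by linarith, by linarith⟩,
      fun hy ↦ hy₁.not_ge hy.1.2⟩

theorem sub_le_measureReal_Ioc_square_inter {ε : ℝ} (ha : 0 ≤ a) (hab : 2 * a < b)
    (hω : Measurable ω) (hε : 0 ≤ ε)
    (hbad : volume {y ∈ Set.Ico 0 b ×ˢ Set.Ico 0 b | ω y ≠ 1} ≤ ENNReal.ofReal ε) :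
    a ^ 2 - ε ≤ volume.real (Set.Ioc a (2 * a) ×ˢ Set.Ioc a (2 * a) ∩ {y | ω y = 1}) := by
  have h := measureReal_sub_le_measureReal_inter (hω (measurableSet_singleton 1))
    ((Ioc_square_subset_square_diff hab).trans Set.sdiff_subset)
    ((volume_Ioc_square ha).trans_ne ENNReal.ofReal_ne_top) hε hbad
  rwa [measureReal_def, volume_Ioc_square ha, ENNReal.toReal_ofReal (sq_nonneg a)] at h

theorem mul_measureReal_le_setIntegral_kernel_mul (he : e ≤ 0) (ha : 0 < a)
    (hab : 2 * a < b) (hω : Measurable ω)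
    (hω01 : ∀ y ∈ Set.Ico 0 b ×ˢ Set.Ico 0 b, 0 ≤ ω y ∧ ω y ≤ 1) :
    a ^ 2 * (3 * a) ^ e * volume.real (Set.Ioc a (2 * a) ×ˢ Set.Ioc a (2 * a) ∩ {y | ω y = 1})
      ≤ ∫ y in (Set.Ico 0 b ×ˢ Set.Ico 0 b) \ (Set.Icc 0 a ×ˢ Set.Icc 0 a),
          kernel e y * ω y := by
  have hRS := Ioc_square_subset_square_diff hab
  refine mul_measureReal_le_setIntegral (by measurability)
    ((measurableSet_Ioc.prod measurableSet_Ioc).inter (hω (measurableSet_singleton 1)))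
    (Set.inter_subset_left.trans hRS)
    (measure_ne_top_of_subset Set.inter_subset_left
      ((volume_Ioc_square ha.le).trans_ne ENNReal.ofReal_ne_top))
    (integrableOn_kernel_mul he ha hω fun y hy ↦
      abs_le.2 ⟨by linarith [hω01 y hy], (hω01 y hy).2⟩)
    (fun y hy ↦ mul_nonneg (kernel_nonneg hy.1.1.1 hy.1.2.1) (hω01 y hy.1).1) ?_
  rintro y ⟨hyR, hy1 : ω y = 1⟩
  rw [hy1, mul_one]
  exact le_kernel_of_mem_Ioc_square he ha hyR

end square

end kernel

theorem mul_sqrt_rpow_two_mul {c δ : ℝ} (x : ℝ) (hc : 0 ≤ c) (hδ : 0 ≤ δ) :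
    (c * √δ) ^ (2 * x) = c ^ (2 * x) * δ ^ x := by
  rw [mul_rpow hc (sqrt_nonneg δ), sqrt_eq_rpow, ← rpow_mul hδ]
  ring_nf

theorem stmt_12_general (α : ℝ) (hα : 0 < α) :
    ∃ M > 0, ∃ c > 0, ∃ δs > 0, ∀ δ : ℝ, δ ∈ Set.Ioc (0 : ℝ) δs →
      ∀ ω : ℝ × ℝ → ℝ, Measurable ω →
        (∀ y ∈ Set.Ico (0 : ℝ) π ×ˢ Set.Ico (0 : ℝ) π, 0 ≤ ω y ∧ ω y ≤ 1) →
        volume {y ∈ Set.Ico (0 : ℝ) π ×ˢ Set.Ico (0 : ℝ) π | ω y ≠ 1}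
          ≤ ENNReal.ofReal (4 * π * δ) →
        c * δ ^ (-α)
          ≤ ∫ y in (Set.Ico (0 : ℝ) π ×ˢ Set.Ico (0 : ℝ) π) \
                (Set.Icc (0 : ℝ) (M * Real.sqrt δ) ×ˢ Set.Icc (0 : ℝ) (M * Real.sqrt δ)),
              y.1 * y.2 * (Real.sqrt (y.1 ^ 2 + y.2 ^ 2)) ^ (-4 - 2 * α) * ω y := by
  refine ⟨4, by norm_num, 48 * 12 ^ (-4 - 2 * α), by positivity, 1 / 8, by norm_num, ?_⟩
  rintro δ ⟨hδ, hδs⟩ ω hωm hω hbad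
  set a := 4 * √δ
  have ha : 0 < a := by positivity
  have ha2 : a ^ 2 = 16 * δ := by rw [mul_pow, sq_sqrt hδ.le]; norm_num
  have h2a : 2 * a < π := by nlinarith [pi_gt_three]
  have he : -4 - 2 * α ≤ 0 := by linarith
  have hgood :
      3 * δ ≤ volume.real (Set.Ioc a (2 * a) ×ˢ Set.Ioc a (2 * a) ∩ {y | ω y = 1}) := by
    have := sub_le_measureReal_Ioc_square_inter ha.le h2a hωm (by positivity) hbad
    nlinarith [pi_lt_d2]
  have hδα : δ ^ (-α) = δ * δ * δ ^ (-2 - α) := by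
    rw [show -α = 1 + (1 + (-2 - α)) by ring, rpow_add hδ, rpow_add hδ, rpow_one]; ring
  calc 48 * 12 ^ (-4 - 2 * α) * δ ^ (-α) = a ^ 2 * (3 * a) ^ (-4 - 2 * α) * (3 * δ) := by
        rw [ha2, show 3 * a = 12 * √δ by ring, show -4 - 2 * α = 2 * (-2 - α) by ring,
          mul_sqrt_rpow_two_mul _ (by norm_num) hδ.le, hδα]
        ring
    _ ≤ _ := by gcongr
    _ ≤ _ := mul_measureReal_le_setIntegral_kernel_mul he ha h2a hωm hω

/-- quantitative lower bound of Lemma 2.4. -/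
theorem stmt_12 (α : ℝ) (hα : 0 < α) (hα1 : α < 1) :
    ∃ M > 0, ∃ c > 0, ∃ δs > 0, ∀ δ : ℝ, δ ∈ Set.Ioc (0 : ℝ) δs →
      ∀ ω : ℝ × ℝ → ℝ, Measurable ω →
        (∀ y ∈ Set.Ico (0 : ℝ) π ×ˢ Set.Ico (0 : ℝ) π, 0 ≤ ω y ∧ ω y ≤ 1) →
        volume {y ∈ Set.Ico (0 : ℝ) π ×ˢ Set.Ico (0 : ℝ) π | ω y ≠ 1}
          ≤ ENNReal.ofReal (4 * π * δ) →
        c * δ ^ (-α)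
          ≤ ∫ y in (Set.Ico (0 : ℝ) π ×ˢ Set.Ico (0 : ℝ) π) \
                (Set.Icc (0 : ℝ) (M * Real.sqrt δ) ×ˢ Set.Icc (0 : ℝ) (M * Real.sqrt δ)),
              y.1 * y.2 * (Real.sqrt (y.1 ^ 2 + y.2 ^ 2)) ^ (-4 - 2 * α) * ω y :=
  stmt_12_general α hα
end

section
/- Let ω solve ∂ₜω + u₁∂₁ω + u₂∂₂ω = 0 where u₁(·,t) is odd in x₁ and u₂(·,t) is even in x₁, and all functions are smooth. If ∂₁ω(0, x₂, 0) = 0 for all x₂, then ∂₁ω(0, x₂, t) = 0 for all x₂ and all t during which the solution stays smooth. -/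
open Real Set NNReal Topology

namespace Stmt18Aux

abbrev E3 := ℝ × (ℝ × ℝ)

def et : E3 := (1, (0, 0))
def e1 : E3 := (0, (1, 0))
def e2 : E3 := (0, (0, 1))

lemma hasDerivAt_lineT (t x1 x2 : ℝ) :
    HasDerivAt (fun s : ℝ => ((s, (x1, x2)) : E3)) et t :=
  (hasDerivAt_id t).prodMk ((hasDerivAt_const t x1).prodMk (hasDerivAt_const t x2))

lemma hasDerivAt_line1 (t x1 x2 : ℝ) :
    HasDerivAt (fun a : ℝ => ((t, (a, x2)) : E3)) e1 x1 :=
  (hasDerivAt_const x1 t).prodMk ((hasDerivAt_id x1).prodMk (hasDerivAt_const x1 x2))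

lemma hasDerivAt_line2 (t x1 x2 : ℝ) :
    HasDerivAt (fun b : ℝ => ((t, (x1, b)) : E3)) e2 x2 :=
  (hasDerivAt_const x2 t).prodMk ((hasDerivAt_const x2 x1).prodMk (hasDerivAt_id x2))

variable {f : E3 → ℝ} {t x1 x2 : ℝ}

lemma sliceT (hf : ContDiff ℝ (⊤ : ℕ∞) f) :
    HasDerivAt (fun s => f (s, (x1, x2))) (fderiv ℝ f (t, (x1, x2)) et) t :=
  ((hf.differentiable (by simp) _).hasFDerivAt).comp_hasDerivAt t (hasDerivAt_lineT t x1 x2)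

lemma slice1 (hf : ContDiff ℝ (⊤ : ℕ∞) f) :
    HasDerivAt (fun a => f (t, (a, x2))) (fderiv ℝ f (t, (x1, x2)) e1) x1 :=
  ((hf.differentiable (by simp) _).hasFDerivAt).comp_hasDerivAt x1 (hasDerivAt_line1 t x1 x2)

lemma slice2 (hf : ContDiff ℝ (⊤ : ℕ∞) f) :
    HasDerivAt (fun b => f (t, (x1, b))) (fderiv ℝ f (t, (x1, x2)) e2) x2 :=
  ((hf.differentiable (by simp) _).hasFDerivAt).comp_hasDerivAt x2 (hasDerivAt_line2 t x1 x2)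

lemma contDiff_dapply (hf : ContDiff ℝ (⊤ : ℕ∞) f) (v : E3) :
    ContDiff ℝ (⊤ : ℕ∞) (fun q => fderiv ℝ f q v) :=
  (hf.fderiv_right (by simp)).clm_apply contDiff_const

lemma mixed (hf : ContDiff ℝ (⊤ : ℕ∞) f) (p v w : E3) :
    fderiv ℝ (fun q => fderiv ℝ f q v) p w = fderiv ℝ (fun q => fderiv ℝ f q w) p v := by
  have hd : ContDiff ℝ (⊤ : ℕ∞) (fderiv ℝ f) := hf.fderiv_right (by simp)
  have hda : DifferentiableAt ℝ (fderiv ℝ f) p := (hd.differentiable (by simp)) p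
  have h1 : ∀ u : E3, fderiv ℝ (fun q => fderiv ℝ f q u) p
      = (fderiv ℝ (fderiv ℝ f) p).flip u := by
    intro u
    rw [fderiv_clm_apply hda (differentiableAt_const u)]
    simp
  rw [h1 v, h1 w]
  simpa using (hf.contDiffAt.isSymmSndFDerivAt (by simp; exact WithTop.coe_le_coe.mpr le_top)) w v

lemma even_deriv_zero {g : ℝ → ℝ} (h : ∀ x, g (-x) = g x) :
    deriv g 0 = 0 := by
  have h1 : deriv (fun x => g (-x)) 0 = -deriv g (-0) := deriv_comp_neg g 0
  have h2 : (fun x => g (-x)) = g := funext h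
  rw [h2, neg_zero] at h1
  linarith

lemma key (ω u1 u2 : ℝ → ℝ × ℝ → ℝ)
    (hω : ContDiff ℝ (⊤ : ℕ∞) (fun p : E3 => ω p.1 p.2))
    (hu1 : ContDiff ℝ (⊤ : ℕ∞) (fun p : E3 => u1 p.1 p.2))
    (hu2 : ContDiff ℝ (⊤ : ℕ∞) (fun p : E3 => u2 p.1 p.2))
    (hpde : ∀ t x1 x2 : ℝ,
      deriv (fun s => ω s (x1, x2)) t
        + u1 t (x1, x2) * deriv (fun a => ω t (a, x2)) x1
        + u2 t (x1, x2) * deriv (fun b => ω t (x1, b)) x2 = 0)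
    (hodd : ∀ t x1 x2 : ℝ, u1 t (-x1, x2) = -u1 t (x1, x2))
    (heven : ∀ t x1 x2 : ℝ, u2 t (-x1, x2) = u2 t (x1, x2))
    (t x2 : ℝ) :
    fderiv ℝ (fun q : E3 => fderiv ℝ (fun p : E3 => ω p.1 p.2) q e1) (t, (0, x2)) et
      + u2 t (0, x2) *
        fderiv ℝ (fun q : E3 => fderiv ℝ (fun p : E3 => ω p.1 p.2) q e1) (t, (0, x2)) e2
      + fderiv ℝ (fun p : E3 => u1 p.1 p.2) (t, (0, x2)) e1 *
        fderiv ℝ (fun p : E3 => ω p.1 p.2) (t, (0, x2)) e1 = 0 := by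
  set F : E3 → ℝ := fun p => ω p.1 p.2 with hF
  set U1 : E3 → ℝ := fun p => u1 p.1 p.2 with hU1
  set U2 : E3 → ℝ := fun p => u2 p.1 p.2 with hU2
  set p0 : E3 := (t, (0, x2)) with hp0
  -- the PDE in fderiv form, along the x1-line
  have hk0 : ∀ a : ℝ, fderiv ℝ F (t, (a, x2)) et
      + u1 t (a, x2) * fderiv ℝ F (t, (a, x2)) e1
      + u2 t (a, x2) * fderiv ℝ F (t, (a, x2)) e2 = 0 := by
    intro a
    have hT' : deriv (fun s => ω s (a, x2)) t = fderiv ℝ F (t, (a, x2)) et :=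
      (show HasDerivAt (fun s => ω s (a, x2)) (fderiv ℝ F (t, (a, x2)) et) t from sliceT hω).deriv
    have h1' : deriv (fun b => ω t (b, x2)) a = fderiv ℝ F (t, (a, x2)) e1 :=
      (show HasDerivAt (fun b => ω t (b, x2)) (fderiv ℝ F (t, (a, x2)) e1) a from slice1 hω).deriv
    have h2' : deriv (fun b => ω t (a, b)) x2 = fderiv ℝ F (t, (a, x2)) e2 :=
      (show HasDerivAt (fun b => ω t (a, b)) (fderiv ℝ F (t, (a, x2)) e2) x2 from slice2 hω).deriv
    have := hpde t a x2
    rw [hT', h1', h2'] at this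
    exact this
  -- differentiate in a at a = 0
  have hder : HasDerivAt (fun a : ℝ => fderiv ℝ F (t, (a, x2)) et
      + u1 t (a, x2) * fderiv ℝ F (t, (a, x2)) e1
      + u2 t (a, x2) * fderiv ℝ F (t, (a, x2)) e2)
      (fderiv ℝ (fun q => fderiv ℝ F q et) p0 e1
        + (fderiv ℝ U1 p0 e1 * fderiv ℝ F p0 e1
          + U1 p0 * fderiv ℝ (fun q => fderiv ℝ F q e1) p0 e1)
        + (fderiv ℝ U2 p0 e1 * fderiv ℝ F p0 e2
          + U2 p0 * fderiv ℝ (fun q => fderiv ℝ F q e2) p0 e1)) 0 := by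
    exact ((slice1 (t := t) (x1 := 0) (x2 := x2) (contDiff_dapply hω et)).add
      ((slice1 (t := t) (x1 := 0) (x2 := x2) hu1).mul
        (slice1 (t := t) (x1 := 0) (x2 := x2) (contDiff_dapply hω e1)))).add
      ((slice1 (t := t) (x1 := 0) (x2 := x2) hu2).mul
        (slice1 (t := t) (x1 := 0) (x2 := x2) (contDiff_dapply hω e2)))
  have hD0 : fderiv ℝ (fun q => fderiv ℝ F q et) p0 e1
      + (fderiv ℝ U1 p0 e1 * fderiv ℝ F p0 e1
        + U1 p0 * fderiv ℝ (fun q => fderiv ℝ F q e1) p0 e1)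
      + (fderiv ℝ U2 p0 e1 * fderiv ℝ F p0 e2
        + U2 p0 * fderiv ℝ (fun q => fderiv ℝ F q e2) p0 e1) = 0 := by
    have h0 : HasDerivAt (fun a : ℝ => fderiv ℝ F (t, (a, x2)) et
        + u1 t (a, x2) * fderiv ℝ F (t, (a, x2)) e1
        + u2 t (a, x2) * fderiv ℝ F (t, (a, x2)) e2) 0 0 := by
      have : (fun a : ℝ => fderiv ℝ F (t, (a, x2)) et
        + u1 t (a, x2) * fderiv ℝ F (t, (a, x2)) e1
        + u2 t (a, x2) * fderiv ℝ F (t, (a, x2)) e2) = fun _ => (0:ℝ) := funext hk0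
      rw [this]
      exact hasDerivAt_const 0 0
    exact hder.unique h0
  -- vanishing terms
  have hU10 : U1 p0 = 0 := by
    have h := hodd t 0 x2
    norm_num at h
    show u1 t (0, x2) = 0
    linarith
  have hU2e : fderiv ℝ U2 p0 e1 = 0 := by
    have hs : HasDerivAt (fun a => u2 t (a, x2)) (fderiv ℝ U2 p0 e1) 0 := slice1 hu2
    rw [← hs.deriv]
    exact even_deriv_zero (fun x => heven t x x2)
  -- symmetry of mixed partials
  have hm1 : fderiv ℝ (fun q => fderiv ℝ F q et) p0 e1
      = fderiv ℝ (fun q => fderiv ℝ F q e1) p0 et := mixed hω p0 et e1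
  have hm2 : fderiv ℝ (fun q => fderiv ℝ F q e2) p0 e1
      = fderiv ℝ (fun q => fderiv ℝ F q e1) p0 e2 := mixed hω p0 e2 e1
  rw [hm1, hm2, hU10, hU2e] at hD0
  have : U2 p0 = u2 t (0, x2) := rfl
  linarith [hD0]


lemma bounded_of_periodic {h : ℝ × ℝ → ℝ} (hc : Continuous h) (T : ℝ)
    (hper : ∀ s x, h (s, x + 2 * π) = h (s, x)) :
    ∃ C : ℝ, 0 ≤ C ∧ ∀ s ∈ Icc (0:ℝ) T, ∀ x : ℝ, |h (s, x)| ≤ C := by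
  obtain ⟨C, hC⟩ :=
    (isCompact_Icc.prod isCompact_Icc :
      IsCompact (Icc (0:ℝ) T ×ˢ Icc (0:ℝ) (2 * π))).exists_bound_of_continuousOn
      hc.continuousOn
  refine ⟨max C 0, le_max_right _ _, ?_⟩
  intro s hs x
  have hp : Function.Periodic (fun x => h (s, x)) (2 * π) := fun x => hper s x
  obtain ⟨y, hy, hxy⟩ := hp.exists_mem_Ico₀ (by positivity) x
  have : |h (s, y)| ≤ C := by
    simpa [Real.norm_eq_abs] using hC (s, y) (Set.mk_mem_prod hs (Ico_subset_Icc_self hy))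
  calc |h (s, x)| = |h (s, y)| := by rw [show h (s, x) = h (s, y) from hxy]
    _ ≤ max C 0 := le_trans this (le_max_left _ _)

lemma lip_slice {Φ : ℝ × ℝ → ℝ} {K : ℝ≥0} {A B : Set ℝ}
    (h : LipschitzOnWith K Φ (A ×ˢ B)) {s : ℝ} (hs : s ∈ A) :
    LipschitzOnWith K (fun x => Φ (s, x)) B := by
  intro x hx y hy
  have := h (Set.mk_mem_prod hs hx) (Set.mk_mem_prod hs hy)
  simpa [Prod.edist_eq, edist_self] using this

lemma lipschitzOnWith_of_contDiff {Φ : ℝ × ℝ → ℝ} (hΦ : ContDiff ℝ (⊤ : ℕ∞) Φ) {s : Set (ℝ × ℝ)}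
    (hs : Convex ℝ s) (hc : IsCompact s) :
    ∃ K : ℝ≥0, LipschitzOnWith K Φ s := by
  obtain ⟨M, hM⟩ := hc.exists_bound_of_continuousOn ((hΦ.fderiv_right (m := (⊤ : ℕ∞)) (by simp)).continuous).continuousOn
  refine ⟨M.toNNReal, hs.lipschitzOnWith_of_nnnorm_hasFDerivWithin_le
    (f' := fderiv ℝ Φ)
    (fun x _ => ((hΦ.differentiable (by simp)) x).hasFDerivAt.hasFDerivWithinAt) ?_⟩
  intro x hx
  rw [← norm_toNNReal]
  exact Real.toNNReal_mono (hM x hx)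

end Stmt18Aux

open Stmt18Aux

/-- preservation of the degeneracy `∂₁ω(0,x₂,t) = 0` (Lemma 3.1). -/
theorem stmt_18 (T : ℝ) (hT : 0 ≤ T)
    (ω u1 u2 : ℝ → ℝ × ℝ → ℝ)
    (hω : ContDiff ℝ (⊤ : ℕ∞) (fun p : ℝ × (ℝ × ℝ) => ω p.1 p.2))
    (hu1 : ContDiff ℝ (⊤ : ℕ∞) (fun p : ℝ × (ℝ × ℝ) => u1 p.1 p.2))
    (hu2 : ContDiff ℝ (⊤ : ℕ∞) (fun p : ℝ × (ℝ × ℝ) => u2 p.1 p.2))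
    (hper : ∀ t x1 x2 : ℝ, u2 t (x1, x2 + 2 * π) = u2 t (x1, x2))
    (hpde : ∀ t x1 x2 : ℝ,
      deriv (fun s => ω s (x1, x2)) t
        + u1 t (x1, x2) * deriv (fun a => ω t (a, x2)) x1
        + u2 t (x1, x2) * deriv (fun b => ω t (x1, b)) x2 = 0)
    (hodd : ∀ t x1 x2 : ℝ, u1 t (-x1, x2) = -u1 t (x1, x2))
    (heven : ∀ t x1 x2 : ℝ, u2 t (-x1, x2) = u2 t (x1, x2))
    (h0 : ∀ x2 : ℝ, deriv (fun a => ω 0 (a, x2)) 0 = 0) :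
    ∀ t ∈ Set.Icc 0 T, ∀ x2 : ℝ, deriv (fun a => ω t (a, x2)) 0 = 0 := by
  intro t₀ ht₀ y₀
  classical
  set F : E3 → ℝ := fun p => ω p.1 p.2 with hFdef
  set G : E3 → ℝ := fun q => fderiv ℝ F q e1 with hGdef
  have hG : ContDiff ℝ (⊤ : ℕ∞) G := contDiff_dapply hω e1
  have hgoal : deriv (fun a => ω t₀ (a, y₀)) 0 = G (t₀, (0, y₀)) :=
    (show HasDerivAt (fun a => ω t₀ (a, y₀)) (G (t₀, (0, y₀))) 0 from slice1 hω).deriv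
  rw [hgoal]
  -- the velocity field on the line x₁ = 0
  set f : ℝ → ℝ → ℝ := fun s x => u2 s (0, x) with hfdef
  have hfC : ContDiff ℝ (⊤ : ℕ∞) (fun q : ℝ × ℝ => f q.1 q.2) := by
    have : (fun q : ℝ × ℝ => f q.1 q.2)
        = (fun p : E3 => u2 p.1 p.2) ∘ (fun q : ℝ × ℝ => (q.1, ((0:ℝ), q.2))) := rfl
    rw [this]
    exact hu2.comp (contDiff_fst.prodMk (contDiff_const.prodMk contDiff_snd))
  obtain ⟨C, hC0, hCb⟩ := bounded_of_periodic hfC.continuous T (fun s x => hper s 0 x)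
  set R : ℝ := C * T + 1 with hRdef
  have hR0 : 0 ≤ R := by nlinarith
  obtain ⟨L, hL⟩ := lipschitzOnWith_of_contDiff hfC
    ((convex_Icc 0 T).prod (convex_closedBall y₀ R))
    (isCompact_Icc.prod (isCompact_closedBall _ _))
  have hPL : IsPicardLindelof f (⟨t₀, ht₀⟩ : Icc (0:ℝ) T) y₀ R.toNNReal 0 C.toNNReal L :=
    { lipschitzOnWith := fun s hs => by
        rw [Real.coe_toNNReal _ hR0]
        exact lip_slice hL hs
      continuousOn := fun x _ =>
        (hfC.continuous.comp (continuous_id.prodMk continuous_const)).continuousOn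
      norm_le := fun s hs x _ => by
        rw [Real.coe_toNNReal _ hC0]
        simpa [Real.norm_eq_abs] using hCb s hs x
      mul_max_le := by
        simp only [Real.coe_toNNReal _ hC0, Real.coe_toNNReal _ hR0, NNReal.coe_zero]
        show C * max (T - t₀) (t₀ - 0) ≤ R - 0
        have h1 : max (T - t₀) (t₀ - 0) ≤ T := by
          apply max_le
          · linarith [ht₀.1]
          · linarith [ht₀.2]
        have h2 : C * max (T - t₀) (t₀ - 0) ≤ C * T :=
          mul_le_mul_of_nonneg_left h1 hC0
        linarith }
  obtain ⟨X, hX0', hX'⟩ := hPL.exists_eq_forall_mem_Icc_hasDerivWithinAt₀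
  have hX0 : X t₀ = y₀ := hX0'
  have hXc : ContinuousOn X (Icc 0 T) := fun s hs => (hX' s hs).continuousWithinAt
  -- the quantity transported along characteristics
  set g : ℝ → ℝ := fun s => G (s, (0, X s)) with hgdef
  set cf : ℝ → ℝ := fun s => fderiv ℝ (fun p : E3 => u1 p.1 p.2) (s, (0, X s)) e1 with hcdef
  have hγc : ContinuousOn (fun s : ℝ => ((s, (0, X s)) : E3)) (Icc 0 T) :=
    (continuousOn_id).prodMk (continuousOn_const.prodMk hXc)
  have hcc : ContinuousOn cf (Icc 0 T) :=
    ((contDiff_dapply hu1 e1).continuous.comp_continuousOn hγc)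
  have hgc : ContinuousOn g (Icc 0 T) := hG.continuous.comp_continuousOn hγc
  -- bound for the coefficient
  obtain ⟨Kb, hKb⟩ := isCompact_Icc.exists_bound_of_continuousOn hcc
  set c' : ℝ → ℝ := fun s => cf ↑(projIcc 0 T hT s) with hc'def
  have hc'bound : ∀ s, |c' s| ≤ max Kb 0 := by
    intro s
    have := hKb _ (projIcc 0 T hT s).2
    rw [Real.norm_eq_abs] at this
    exact le_trans this (le_max_left _ _)
  have hc'eq : ∀ s ∈ Icc (0:ℝ) T, c' s = cf s := by
    intro s hs
    rw [hc'def]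
    simp [projIcc_of_mem hT hs]
  -- the ODE field
  set v : ℝ → ℝ → ℝ := fun s y => -(c' s) * y with hvdef
  have hv : ∀ s, LipschitzWith (max Kb 0).toNNReal (v s) := by
    intro s
    apply LipschitzWith.of_dist_le_mul
    intro y z
    rw [Real.dist_eq, Real.dist_eq]
    have : v s y - v s z = -(c' s) * (y - z) := by rw [hvdef]; ring
    rw [this, abs_mul, abs_neg]
    have h1 : |c' s| ≤ ((max Kb 0).toNNReal : ℝ) := by
      rw [Real.coe_toNNReal _ (le_max_right _ _)]
      exact hc'bound s
    exact mul_le_mul_of_nonneg_right h1 (abs_nonneg _)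
  -- g satisfies the ODE on [0, t₀]
  have hgd : ∀ s ∈ Ico (0:ℝ) t₀, HasDerivWithinAt g (v s (g s)) (Ici s) s := by
    intro s hs
    have hsT : s < T := lt_of_lt_of_le hs.2 ht₀.2
    have hsIcc : s ∈ Icc (0:ℝ) T := ⟨hs.1, hsT.le⟩
    have hγ : HasDerivWithinAt (fun r : ℝ => ((r, (0, X r)) : E3))
        ((1:ℝ), ((0:ℝ), f s (X s))) (Icc 0 T) s :=
      ((hasDerivAt_id s).hasDerivWithinAt).prodMk
        (((hasDerivAt_const s (0:ℝ)).hasDerivWithinAt).prodMk (hX' s hsIcc))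
    have hcomp : HasDerivWithinAt g
        (fderiv ℝ G (s, (0, X s)) (1, (0, f s (X s)))) (Icc 0 T) s :=
      ((hG.differentiable (by simp) _).hasFDerivAt).comp_hasDerivWithinAt s hγ
    have hdec : ((1:ℝ), ((0:ℝ), f s (X s))) = et + f s (X s) • e2 := by
      simp [et, e2, Prod.ext_iff]
    have hlin : fderiv ℝ G (s, (0, X s)) (1, (0, f s (X s)))
        = fderiv ℝ G (s, (0, X s)) et + f s (X s) * fderiv ℝ G (s, (0, X s)) e2 := by
      rw [hdec, map_add, map_smul, smul_eq_mul]
    have hkey := key ω u1 u2 hω hu1 hu2 hpde hodd heven s (X s)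
    have hval : fderiv ℝ G (s, (0, X s)) (1, (0, f s (X s))) = -(cf s) * g s := by
      rw [hlin]
      have hGf : G (s, (0, X s)) = fderiv ℝ F (s, (0, X s)) e1 := rfl
      rw [hgdef]
      simp only [hcdef]
      rw [hGf]
      linarith [hkey]
    have hIci : Icc (0:ℝ) T ∈ 𝓝[Ici s] s := by
      rw [mem_nhdsWithin]
      refine ⟨Ioo (-1) T, isOpen_Ioo, ⟨by linarith [hs.1], hsT⟩, ?_⟩
      rintro x ⟨⟨hx1, hx2⟩, hx3⟩
      exact ⟨le_trans hs.1 hx3, hx2.le⟩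
    have := (hcomp.mono_of_mem_nhdsWithin hIci)
    rw [hval] at this
    have hvs : v s (g s) = -(cf s) * g s := by
      show -c' s * g s = -(cf s) * g s
      rw [hc'eq s hsIcc]
    rw [hvs]
    exact this
  -- the zero function satisfies the same ODE
  have hzd : ∀ s ∈ Ico (0:ℝ) t₀, HasDerivWithinAt (fun _ : ℝ => (0:ℝ)) (v s 0) (Ici s) s := by
    intro s _
    have : v s 0 = 0 := by rw [hvdef]; ring
    rw [this]
    exact hasDerivWithinAt_const s (Ici s) 0
  -- initial condition
  have hg0 : g 0 = 0 := by
    have hs : HasDerivAt (fun a => ω 0 (a, X 0)) (G (0, (0, X 0))) 0 := slice1 hω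
    have := hs.deriv
    rw [h0 (X 0)] at this
    exact this.symm
  -- uniqueness
  have huniq : EqOn g (fun _ => (0:ℝ)) (Icc 0 t₀) :=
    ODE_solution_unique hv (hgc.mono (Icc_subset_Icc le_rfl ht₀.2)) hgd
      continuousOn_const hzd hg0
  have := huniq (right_mem_Icc.mpr ht₀.1)
  rw [hgdef] at this
  simp only at this
  rw [hX0] at this
  exact this
end
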